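/- Let d ≥ 1 be an integer, α ∈ (0,2), β ∈ (0,1), and suppose 0 < η ≤ α/(βd). Let G be a measurable kernel satisfying the lower heat-kernel bound, let V₀ : ℝ^d → [0,∞) be measurable and not almost everywhere zero, and let V : (0,∞) × ℝ^d → [0,∞] be a mild solution with initial data V₀. Then there exist C > 0 and T₁ > 0 such that for every T ≥ T₁, every t ∈ (0, T/3) and every x ∈ ℝ^d with |x| ≤ T^{β/α}, ∫₀^T ∫_{ℝ^d} V(s,y)^{1+η} G(T+t−s, x−y) dy ds ≥ C·T. -/

import Mathlib

/-!
Write `p = βd/α`. On the parabolic region `‖y‖ ≤ s^{β/α}` the kernel satisfies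
`G(τ - s, x - y) ≳ τ^{-p}` whenever `s ≤ τ/2` and `‖x‖ ≤ τ^{β/α}`. Hence a lower bound
`V(s, y) ≥ γ s^{-p}` on this region for `s ≥ S` makes the time-`s` slice of the Duhamel term at
`(τ, x)` at least `≳ γ^{1+η} τ^{-p} s^{-pη}`, the ball having volume `≍ s^p`. For `η ≤ α/(βd)`
this is `≳ s⁻¹`, and integrating over `[S, τ/2]` gains a factor `log (τ / 2S)`: the bound improves
to a fixed multiple of `γ^{1+η}` from time `4S` on, and to an arbitrarily large constant further
out. The linear term starts this off, since the data are non-trivial. Iterating the improvement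
from a large constant gives constants `B D^n` from time `4^n S` on, with `D = 4^{1+p}`. For
`T ≈ 4^n S` this constant is `≳ T^{1+p}`, and the slices over `[T/4, T/2]` give
`≳ T^{1+p} · T^{-p} = T`.
-/

open MeasureTheory ENNReal Metric

lemma rpow_le_min_of_parabolic {d α β θ t w : ℝ} (hd : 0 ≤ d) (hα : 0 < α) (hβ : 0 < β)
    (hθ : 0 < θ) (hθt : θ / 2 ≤ t) (htθ : t ≤ θ) (hw : 0 < w) (hwθ : w ≤ 2 * θ ^ (β / α)) :
    2 ^ (-(β + d + α)) * θ ^ (-(β * d) / α) ≤ min (t ^ (-(β * d) / α)) (t ^ β / w ^ (d + α)) := by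
  have ht : 0 < t := by linarith
  refine le_min ?_ ?_
  · calc 2 ^ (-(β + d + α)) * θ ^ (-(β * d) / α) ≤ 1 * θ ^ (-(β * d) / α) := by
          gcongr
          exact Real.rpow_le_one_of_one_le_of_nonpos one_le_two (by linarith)
      _ ≤ t ^ (-(β * d) / α) := by
          rw [one_mul]
          exact Real.rpow_le_rpow_of_nonpos ht htθ
            (div_nonpos_of_nonpos_of_nonneg (by nlinarith) hα.le)
  · rw [le_div_iff₀ (by positivity)]
    calc 2 ^ (-(β + d + α)) * θ ^ (-(β * d) / α) * w ^ (d + α)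
        ≤ 2 ^ (-(β + d + α)) * θ ^ (-(β * d) / α) * (2 * θ ^ (β / α)) ^ (d + α) := by
          gcongr
      _ = (2 ^ (-(β + d + α)) * 2 ^ (d + α)) * (θ ^ (-(β * d) / α) * θ ^ (β / α * (d + α))) := by
          rw [Real.mul_rpow zero_le_two (by positivity), ← Real.rpow_mul hθ.le]
          ring
      _ = 2 ^ (-β) * θ ^ β := by
          rw [← Real.rpow_add two_pos, ← Real.rpow_add hθ]
          congr 2 <;> field_simp <;> ring
      _ = (θ / 2) ^ β := by
          rw [Real.div_rpow hθ.le zero_le_two, Real.rpow_neg zero_le_two, inv_mul_eq_div]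
      _ ≤ t ^ β := by gcongr

lemma mul_measure_le_lintegral {X : Type*} [MeasurableSpace X] {μ : Measure X} {s : Set X}
    {c : ℝ≥0∞} {f : X → ℝ≥0∞} (h : ∀ᵐ x ∂μ.restrict s, c ≤ f x) : c * μ s ≤ ∫⁻ x, f x ∂μ :=
  calc c * μ s = ∫⁻ _ in s, c ∂μ := (setLIntegral_const s c).symm
    _ ≤ ∫⁻ x in s, f x ∂μ := lintegral_mono_ae h
    _ ≤ ∫⁻ x, f x ∂μ := setLIntegral_le_lintegral s f

lemma lintegral_ofReal_inv_Ioo {u v : ℝ} (hu : 0 < u) (huv : u ≤ v) :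
    ∫⁻ s in Set.Ioo u v, ENNReal.ofReal s⁻¹ = ENNReal.ofReal (Real.log (v / u)) := by
  have hint : IntegrableOn (fun s : ℝ => s⁻¹) (Set.Ioo u v) :=
    (ContinuousOn.integrableOn_Icc (continuousOn_inv₀.mono fun s hs =>
      (hu.trans_le hs.1).ne')).mono_set Set.Ioo_subset_Icc_self
  rw [← ofReal_integral_eq_lintegral_ofReal hint
    (ae_restrict_of_forall_mem measurableSet_Ioo fun s hs => inv_nonneg.2 (hu.trans hs.1).le),
    ← integral_Ioc_eq_integral_Ioo, ← intervalIntegral.integral_of_le huv,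
    integral_inv_of_pos hu (hu.trans_le huv)]

lemma exists_setLIntegral_ball_pos {X : Type*} [PseudoMetricSpace X] [MeasurableSpace X]
    {μ : Measure X} {f : X → ℝ≥0∞} (hf : Measurable f) (h : ¬ f =ᵐ[μ] 0) (x : X) :
    ∃ n : ℕ, 0 < ∫⁻ y in ball x n, f y ∂μ := by
  by_contra! H
  refine h ((lintegral_eq_zero_iff hf).1 (le_antisymm ?_ zero_le))
  calc ∫⁻ y, f y ∂μ = ∫⁻ y in ⋃ n : ℕ, ball x n, f y ∂μ := by
        rw [iUnion_ball_nat, Measure.restrict_univ]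
    _ ≤ ∑' n : ℕ, ∫⁻ y in ball x n, f y ∂μ := lintegral_iUnion_le _ _
    _ = 0 := ENNReal.tsum_eq_zero.2 fun n => nonpos_iff_eq_zero.1 (H n)

lemma mul_rpow_le_rpow_mul_rpow_neg {η p B c T τ : ℝ} (hη : 0 ≤ η) (hp : 0 ≤ p) (hB : 1 ≤ B)
    (hc : 0 < c) (hcT : 1 ≤ c * T) (hτ : 0 < τ) (hτT : τ ≤ 2 * T) :
    B * c ^ (1 + p) * 2 ^ (-p) * T ≤ (B * (c * T) ^ (1 + p)) ^ (1 + η) * τ ^ (-p) := by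
  have hT : 0 < T := pos_of_mul_pos_right (by linarith) hc.le
  have hγ : 1 ≤ B * (c * T) ^ (1 + p) :=
    one_le_mul_of_one_le_of_one_le hB (Real.one_le_rpow hcT (by linarith))
  calc B * c ^ (1 + p) * 2 ^ (-p) * T = B * (c * T) ^ (1 + p) * (2 * T) ^ (-p) := by
        rw [Real.mul_rpow hc.le hT.le, Real.mul_rpow zero_le_two hT.le, Real.rpow_add hT,
          Real.rpow_one, Real.rpow_neg hT.le]
        field_simp
    _ ≤ (B * (c * T) ^ (1 + p)) ^ (1 + η) * τ ^ (-p) := by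
        gcongr ?_ * ?_
        · exact Real.self_le_rpow_of_one_le hγ (by linarith)
        · exact Real.rpow_le_rpow_of_nonpos hτ hτT (by linarith)

section

variable {d : ℕ} {α β η c₁ : ℝ} {G : ℝ → EuclideanSpace ℝ (Fin d) → ℝ}
  {V₀ : EuclideanSpace ℝ (Fin d) → ℝ} {V : ℝ → EuclideanSpace ℝ (Fin d) → ℝ≥0∞}
  {γ S B : ℝ}

variable (α β c₁ G) in
def KernelLowerBound : Prop :=
  ∀ t : ℝ, 0 < t → ∀ x : EuclideanSpace ℝ (Fin d),
    c₁ * min (t ^ (-(β * d) / α)) (t ^ β / ‖x‖ ^ ((d : ℝ) + α)) ≤ G t x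

def IsMildSolution (G : ℝ → EuclideanSpace ℝ (Fin d) → ℝ) (V₀ : EuclideanSpace ℝ (Fin d) → ℝ)
    (η : ℝ) (V : ℝ → EuclideanSpace ℝ (Fin d) → ℝ≥0∞) : Prop :=
  ∀ t : ℝ, 0 < t → ∀ x : EuclideanSpace ℝ (Fin d),
    V t x = (∫⁻ y, ENNReal.ofReal (G t (x - y)) * ENNReal.ofReal (V₀ y))
      + ∫⁻ s in Set.Ioo (0 : ℝ) t, ∫⁻ y, ENNReal.ofReal (G (t - s) (x - y)) * V s y ^ (1 + η)

variable (α β V) in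
def ParabolicLowerBound (γ S : ℝ) : Prop :=
  ∀ s : ℝ, S ≤ s → ∀ y : EuclideanSpace ℝ (Fin d), ‖y‖ ≤ s ^ (β / α) →
    ENNReal.ofReal (γ * s ^ (-(β * d) / α)) ≤ V s y

variable (d α β c₁) in
noncomputable def duhamelConst : ℝ :=
  c₁ * 2 ^ (-(β + d + α)) * (volume (ball (0 : EuclideanSpace ℝ (Fin d)) 1)).toReal

variable (d α β) in
lemma duhamelConst_nonneg (hc₁ : 0 ≤ c₁) : 0 ≤ duhamelConst d α β c₁ := by
  unfold duhamelConst
  positivity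

variable (d α β) in
lemma duhamelConst_pos (hc₁ : 0 < c₁) : 0 < duhamelConst d α β c₁ := by
  have : 0 < (volume (ball (0 : EuclideanSpace ℝ (Fin d)) 1)).toReal :=
    ENNReal.toReal_pos (measure_ball_pos _ _ one_pos).ne' measure_ball_lt_top.ne
  unfold duhamelConst
  positivity

-- Since `‖0‖ ^ (d + α) = 0` and `a / 0 = 0`, the kernel bound is void at `x = 0`.
lemma KernelLowerBound.le_of_parabolic (hG : KernelLowerBound α β c₁ G) (hα : 0 < α)
    (hβ : 0 < β) (hc₁ : 0 ≤ c₁) {θ t : ℝ} {x : EuclideanSpace ℝ (Fin d)} (hθ : 0 < θ)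
    (hθt : θ / 2 ≤ t) (htθ : t ≤ θ) (hx0 : x ≠ 0) (hxθ : ‖x‖ ≤ 2 * θ ^ (β / α)) :
    c₁ * 2 ^ (-(β + d + α)) * θ ^ (-(β * d) / α) ≤ G t x :=
  calc c₁ * 2 ^ (-(β + d + α)) * θ ^ (-(β * d) / α)
      = c₁ * (2 ^ (-(β + d + α)) * θ ^ (-(β * d) / α)) := mul_assoc _ _ _
    _ ≤ c₁ * min (t ^ (-(β * d) / α)) (t ^ β / ‖x‖ ^ ((d : ℝ) + α)) := by
        gcongr
        exact rpow_le_min_of_parabolic d.cast_nonneg hα hβ hθ hθt htθ (norm_pos_iff.2 hx0) hxθ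
    _ ≤ G t x := hG t (by linarith) x

lemma IsMildSolution.linear_le (hV : IsMildSolution G V₀ η V) {t : ℝ} (ht : 0 < t)
    (x : EuclideanSpace ℝ (Fin d)) :
    ∫⁻ y, ENNReal.ofReal (G t (x - y)) * ENNReal.ofReal (V₀ y) ≤ V t x :=
  (hV t ht x).symm ▸ le_self_add

lemma IsMildSolution.duhamel_le (hV : IsMildSolution G V₀ η V) {t : ℝ} (ht : 0 < t)
    (x : EuclideanSpace ℝ (Fin d)) :
    ∫⁻ s in Set.Ioo (0 : ℝ) t, ∫⁻ y, V s y ^ (1 + η) * ENNReal.ofReal (G (t - s) (x - y))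
      ≤ V t x := by
  simp_rw [mul_comm (V _ _ ^ (1 + η))]
  exact (hV t ht x).symm ▸ le_add_self

lemma ParabolicLowerBound.mono {γ' S' : ℝ} (h : ParabolicLowerBound α β V γ' S')
    (hγ : γ ≤ γ') (hS : S' ≤ S) (hS' : 0 ≤ S') : ParabolicLowerBound α β V γ S :=
  fun s hs y hy => le_trans (ENNReal.ofReal_le_ofReal
    (mul_le_mul_of_nonneg_right hγ (Real.rpow_nonneg (by linarith) _)))
    (h s (hS.trans hs) y hy)

lemma ParabolicLowerBound.le_lintegral_slice [NeZero d] (hV : ParabolicLowerBound α β V γ S)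
    (hG : KernelLowerBound α β c₁ G) (hα : 0 < α) (hβ : 0 < β) (hc₁ : 0 ≤ c₁) (hγ : 0 ≤ γ)
    (hη : 0 ≤ η) {s τ : ℝ} (hs : 0 < s) (hSs : S ≤ s) (hsτ : s ≤ τ / 2)
    {x : EuclideanSpace ℝ (Fin d)} (hx : ‖x‖ ≤ τ ^ (β / α)) :
    ENNReal.ofReal (duhamelConst d α β c₁ * γ ^ (1 + η) * τ ^ (-(β * d) / α)
        * s ^ (-(β * d / α * η)))
      ≤ ∫⁻ y, V s y ^ (1 + η) * ENNReal.ofReal (G (τ - s) (x - y)) := by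
  have hτ : 0 < τ := by linarith
  have hR : 0 < s ^ (β / α) := Real.rpow_pos_of_pos hs _
  have hpt : ∀ᵐ y ∂volume.restrict (ball 0 (s ^ (β / α))),
      ENNReal.ofReal (γ * s ^ (-(β * d) / α)) ^ (1 + η)
          * ENNReal.ofReal (c₁ * 2 ^ (-(β + d + α)) * τ ^ (-(β * d) / α))
        ≤ V s y ^ (1 + η) * ENNReal.ofReal (G (τ - s) (x - y)) := by
    filter_upwards [ae_restrict_mem measurableSet_ball,
      ae_restrict_of_ae ((Set.countable_singleton x).ae_notMem volume)] with y hyR hyx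
    have hyR : ‖y‖ ≤ s ^ (β / α) := (mem_ball_zero_iff.1 hyR).le
    gcongr
    · exact hV s hSs y hyR
    · refine hG.le_of_parabolic hα hβ hc₁ hτ (by linarith) (by linarith)
        (sub_ne_zero.2 (Ne.symm hyx)) ?_
      calc ‖x - y‖ ≤ ‖x‖ + ‖y‖ := norm_sub_le x y
        _ ≤ τ ^ (β / α) + τ ^ (β / α) :=
            add_le_add hx (hyR.trans (by gcongr; linarith))
        _ = 2 * τ ^ (β / α) := by ring
  refine le_trans (le_of_eq ?_) (mul_measure_le_lintegral hpt)
  have hball : volume (ball (0 : EuclideanSpace ℝ (Fin d)) 1)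
      = ENNReal.ofReal (volume (ball (0 : EuclideanSpace ℝ (Fin d)) 1)).toReal :=
    (ENNReal.ofReal_toReal measure_ball_lt_top.ne).symm
  have hRd : (s ^ (β / α)) ^ d = s ^ (β * d / α) := by
    rw [← Real.rpow_natCast, ← Real.rpow_mul hs.le]
    ring_nf
  rw [Measure.addHaar_ball_of_pos _ _ hR, finrank_euclideanSpace_fin, hball, hRd,
    ENNReal.ofReal_rpow_of_nonneg (by positivity) (by linarith),
    ← ENNReal.ofReal_mul (by positivity), ← ENNReal.ofReal_mul (by positivity),
    ← ENNReal.ofReal_mul (by positivity)]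
  congr 1
  have hexp : s ^ (-(β * d) / α * (1 + η)) * s ^ (β * d / α) = s ^ (-(β * d / α * η)) := by
    rw [← Real.rpow_add hs]
    ring_nf
  rw [Real.mul_rpow hγ (by positivity), ← Real.rpow_mul hs.le, duhamelConst, ← hexp]
  ring

lemma ParabolicLowerBound.le_lintegral_duhamel [NeZero d] (hV : ParabolicLowerBound α β V γ S)
    (hG : KernelLowerBound α β c₁ G) (hα : 0 < α) (hβ : 0 < β) (hc₁ : 0 ≤ c₁) (hγ : 0 ≤ γ)
    (hη : 0 ≤ η) (hpη : β * d / α * η ≤ 1) (hS : 1 ≤ S) {u v τ : ℝ} (hSu : S ≤ u)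
    (huv : u ≤ v) (hvτ : v ≤ τ / 2) {x : EuclideanSpace ℝ (Fin d)} (hx : ‖x‖ ≤ τ ^ (β / α)) :
    ENNReal.ofReal (duhamelConst d α β c₁ * γ ^ (1 + η) * τ ^ (-(β * d) / α) * Real.log (v / u))
      ≤ ∫⁻ s in Set.Ioo u v, ∫⁻ y, V s y ^ (1 + η) * ENNReal.ofReal (G (τ - s) (x - y)) := by
  set A := duhamelConst d α β c₁ * γ ^ (1 + η) * τ ^ (-(β * d) / α)
  have hA : 0 ≤ A := by
    have := duhamelConst_nonneg d α β hc₁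
    have : 0 ≤ τ := by linarith
    positivity
  calc ENNReal.ofReal (A * Real.log (v / u))
      = ∫⁻ s in Set.Ioo u v, ENNReal.ofReal A * ENNReal.ofReal s⁻¹ := by
        rw [lintegral_const_mul' _ _ ENNReal.ofReal_ne_top,
          lintegral_ofReal_inv_Ioo (by linarith) huv, ENNReal.ofReal_mul hA]
    _ ≤ _ := setLIntegral_mono' measurableSet_Ioo fun s hs => ?_
  have hs1 : 1 ≤ s := by linarith [hs.1]
  have hdecay : s⁻¹ ≤ s ^ (-(β * d / α * η)) := by
    rw [← Real.rpow_neg_one]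
    exact Real.rpow_le_rpow_of_exponent_le hs1 (by linarith)
  rw [← ENNReal.ofReal_mul hA]
  exact le_trans (ENNReal.ofReal_le_ofReal (by gcongr))
    (hV.le_lintegral_slice hG hα hβ hc₁ hγ hη (by linarith) (by linarith [hs.1])
      (by linarith [hs.2]) hx)

lemma IsMildSolution.exists_parabolicLowerBound [NeZero d] (hmild : IsMildSolution G V₀ η V)
    (hG : KernelLowerBound α β c₁ G) (hα : 0 < α) (hβ : 0 < β) (hc₁ : 0 < c₁)
    (hV₀meas : Measurable V₀) (hV₀nonneg : ∀ x, 0 ≤ V₀ x) (hV₀ne : ¬ V₀ =ᵐ[volume] 0) :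
    ∃ c₀ : ℝ, 0 < c₀ ∧ ∃ S₀ : ℝ, 1 ≤ S₀ ∧ ParabolicLowerBound α β V c₀ S₀ := by
  have hne : ¬ (fun y => ENNReal.ofReal (V₀ y)) =ᵐ[volume] 0 := fun h => hV₀ne <|
    h.mono fun y hy => le_antisymm (ENNReal.ofReal_eq_zero.1 hy) (hV₀nonneg y)
  obtain ⟨R, hR⟩ := exists_setLIntegral_ball_pos hV₀meas.ennreal_ofReal hne 0
  obtain ⟨c₀, -, hc₀, hc₀R⟩ := ENNReal.lt_iff_exists_real_btwn.1 hR
  have hc₀ : 0 < c₀ := ENNReal.ofReal_pos.1 hc₀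
  refine ⟨c₁ * 2 ^ (-(β + d + α)) * c₀, by positivity, max 1 ((R : ℝ) ^ (α / β)),
    le_max_left _ _, fun s hs y hy => ?_⟩
  have hs0 : 0 < s := by linarith [le_max_left 1 ((R : ℝ) ^ (α / β))]
  have hRs : (R : ℝ) ≤ s ^ (β / α) := by
    calc (R : ℝ) = ((R : ℝ) ^ (α / β)) ^ (β / α) := by
          rw [← Real.rpow_mul R.cast_nonneg, div_mul_div_cancel₀ hβ.ne', div_self hα.ne',
            Real.rpow_one]
      _ ≤ s ^ (β / α) := by gcongr; exact (le_max_right _ _).trans hs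
  set k := c₁ * 2 ^ (-(β + d + α)) * s ^ (-(β * d) / α)
  have hk : 0 ≤ k := by positivity
  have hpt : ∀ᵐ z ∂volume.restrict (ball 0 R), ENNReal.ofReal k * ENNReal.ofReal (V₀ z)
      ≤ ENNReal.ofReal (G s (y - z)) * ENNReal.ofReal (V₀ z) := by
    filter_upwards [ae_restrict_mem measurableSet_ball,
      ae_restrict_of_ae ((Set.countable_singleton y).ae_notMem volume)] with z hzR hzy
    gcongr
    refine hG.le_of_parabolic hα hβ hc₁.le hs0 (by linarith) le_rfl
      (sub_ne_zero.2 (Ne.symm hzy)) ?_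
    linarith [norm_sub_le y z, (mem_ball_zero_iff.1 hzR).le]
  calc ENNReal.ofReal (c₁ * 2 ^ (-(β + d + α)) * c₀ * s ^ (-(β * d) / α))
      = ENNReal.ofReal k * ENNReal.ofReal c₀ := by
        rw [← ENNReal.ofReal_mul hk, mul_right_comm _ c₀]
    _ ≤ ENNReal.ofReal k * ∫⁻ z in ball 0 R, ENNReal.ofReal (V₀ z) := by gcongr
    _ = ∫⁻ z in ball 0 R, ENNReal.ofReal k * ENNReal.ofReal (V₀ z) :=
        (lintegral_const_mul' _ _ ENNReal.ofReal_ne_top).symm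
    _ ≤ ∫⁻ z in ball 0 R, ENNReal.ofReal (G s (y - z)) * ENNReal.ofReal (V₀ z) :=
        lintegral_mono_ae hpt
    _ ≤ ∫⁻ z, ENNReal.ofReal (G s (y - z)) * ENNReal.ofReal (V₀ z) :=
        setLIntegral_le_lintegral _ _
    _ ≤ V s y := hmild.linear_le hs0 y

lemma ParabolicLowerBound.boost [NeZero d] (hV : ParabolicLowerBound α β V γ S)
    (hmild : IsMildSolution G V₀ η V) (hG : KernelLowerBound α β c₁ G) (hα : 0 < α) (hβ : 0 < β)
    (hc₁ : 0 ≤ c₁) (hγ : 0 ≤ γ) (hη : 0 ≤ η) (hpη : β * d / α * η ≤ 1) (hS : 1 ≤ S) {L : ℝ}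
    (hL : 1 ≤ L) :
    ParabolicLowerBound α β V (duhamelConst d α β c₁ * γ ^ (1 + η) * Real.log L) (2 * S * L) := by
  intro t ht x hx
  have hSt : S ≤ t / 2 := by nlinarith
  have hLt : Real.log L ≤ Real.log (t / 2 / S) :=
    Real.log_le_log (by linarith) ((le_div_iff₀ (by linarith)).2 (by nlinarith))
  have := duhamelConst_nonneg d α β hc₁
  calc ENNReal.ofReal (duhamelConst d α β c₁ * γ ^ (1 + η) * Real.log L * t ^ (-(β * d) / α))
      ≤ ENNReal.ofReal (duhamelConst d α β c₁ * γ ^ (1 + η) * t ^ (-(β * d) / α)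
          * Real.log (t / 2 / S)) := by
        rw [mul_right_comm _ (Real.log L)]
        have : 0 < t := by nlinarith
        gcongr
    _ ≤ ∫⁻ s in Set.Ioo S (t / 2), ∫⁻ y, V s y ^ (1 + η) * ENNReal.ofReal (G (t - s) (x - y)) :=
        hV.le_lintegral_duhamel hG hα hβ hc₁ hγ hη hpη hS le_rfl hSt le_rfl hx
    _ ≤ ∫⁻ s in Set.Ioo 0 t, ∫⁻ y, V s y ^ (1 + η) * ENNReal.ofReal (G (t - s) (x - y)) :=
        lintegral_mono_set (Set.Ioo_subset_Ioo (by linarith) (by linarith))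
    _ ≤ V t x := hmild.duhamel_le (by linarith) x

lemma ParabolicLowerBound.exists_with_const [NeZero d] (hV : ParabolicLowerBound α β V γ S)
    (hmild : IsMildSolution G V₀ η V) (hG : KernelLowerBound α β c₁ G) (hα : 0 < α) (hβ : 0 < β)
    (hc₁ : 0 < c₁) (hγ : 0 < γ) (hη : 0 ≤ η) (hpη : β * d / α * η ≤ 1) (hS : 1 ≤ S) {M : ℝ}
    (hM : 0 ≤ M) : ∃ S' : ℝ, 1 ≤ S' ∧ ParabolicLowerBound α β V M S' := by
  have hK : 0 < duhamelConst d α β c₁ * γ ^ (1 + η) :=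
    mul_pos (duhamelConst_pos d α β hc₁) (by positivity)
  have hL : 1 ≤ Real.exp (M / (duhamelConst d α β c₁ * γ ^ (1 + η))) :=
    Real.one_le_exp (by positivity)
  refine ⟨_, by nlinarith, (hV.boost hmild hG hα hβ hc₁.le hγ.le hη hpη hS hL).mono
    (le_of_eq ?_) le_rfl (by positivity)⟩
  rw [Real.log_exp, mul_div_cancel₀ _ hK.ne']

lemma ParabolicLowerBound.iterate [NeZero d] (hV : ParabolicLowerBound α β V B S)
    (hmild : IsMildSolution G V₀ η V) (hG : KernelLowerBound α β c₁ G) (hα : 0 < α) (hβ : 0 < β)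
    (hc₁ : 0 ≤ c₁) (hη : 0 ≤ η) (hpη : β * d / α * η ≤ 1) (hS : 1 ≤ S) (hB : 1 ≤ B) {D : ℝ}
    (hD : 1 ≤ D) (hBD : D ≤ duhamelConst d α β c₁ * Real.log 2 * B ^ η) (n : ℕ) :
    ParabolicLowerBound α β V (B * D ^ n) (4 ^ n * S) := by
  induction n with
  | zero => simpa using hV
  | succ n ih =>
    have hBn : B ≤ B * D ^ n := le_mul_of_one_le_right (by linarith) (one_le_pow₀ hD)
    have hS' : 1 ≤ 4 ^ n * S := one_le_mul_of_one_le_of_one_le (one_le_pow₀ (by norm_num)) hS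
    refine (ih.boost hmild hG hα hβ hc₁ (by linarith) hη hpη hS' one_le_two).mono ?_
      (le_of_eq (by ring)) (by positivity)
    have := duhamelConst_nonneg d α β hc₁
    calc B * D ^ (n + 1) = D * (B * D ^ n) := by ring
      _ ≤ duhamelConst d α β c₁ * Real.log 2 * (B * D ^ n) ^ η * (B * D ^ n) := by
          gcongr
          exact hBD.trans (by gcongr)
      _ = duhamelConst d α β c₁ * (B * D ^ n) ^ (1 + η) * Real.log 2 := by
          rw [Real.rpow_add (by linarith), Real.rpow_one]
          ring

lemma ParabolicLowerBound.of_geometric {p : ℝ} (hp : 0 ≤ p) (hB : 0 ≤ B) (hS : 0 < S)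
    (h : ∀ n : ℕ, ParabolicLowerBound α β V (B * (4 ^ (1 + p)) ^ n) (4 ^ n * S)) {T : ℝ}
    (hT : 4 * S ≤ T) : ParabolicLowerBound α β V (B * ((16 * S)⁻¹ * T) ^ (1 + p)) (T / 4) := by
  obtain ⟨n, hn, hn'⟩ := exists_nat_pow_near ((one_le_div (by positivity)).2 hT)
    (by norm_num : (1 : ℝ) < 4)
  rw [le_div_iff₀ (by positivity)] at hn
  rw [div_lt_iff₀ (by positivity), pow_succ] at hn'
  refine (h n).mono ?_ (by linarith) (by positivity)
  rw [← Real.rpow_natCast, ← Real.rpow_mul (by norm_num), mul_comm (1 + p),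
    Real.rpow_mul (by norm_num), Real.rpow_natCast]
  gcongr
  · have : 0 ≤ T := by linarith
    positivity
  · rw [inv_mul_le_iff₀ (by positivity)]
    linarith

lemma ParabolicLowerBound.exists_geometric [NeZero d] (hV : ParabolicLowerBound α β V γ S)
    (hmild : IsMildSolution G V₀ η V) (hG : KernelLowerBound α β c₁ G) (hα : 0 < α) (hβ : 0 < β)
    (hc₁ : 0 < c₁) (hγ : 0 < γ) (hη : 0 < η) (hpη : β * d / α * η ≤ 1) (hS : 1 ≤ S) {D : ℝ}
    (hD : 1 ≤ D) : ∃ B S' : ℝ, 1 ≤ B ∧ 1 ≤ S' ∧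
      ∀ n : ℕ, ParabolicLowerBound α β V (B * D ^ n) (4 ^ n * S') := by
  obtain ⟨B, hBD, hB⟩ := ((((tendsto_rpow_atTop hη).const_mul_atTop
    (mul_pos (duhamelConst_pos d α β hc₁) (Real.log_pos one_lt_two))).eventually_ge_atTop D).and
    (Filter.eventually_ge_atTop 1)).exists
  obtain ⟨S', hS', hBS⟩ :=
    hV.exists_with_const hmild hG hα hβ hc₁ hγ hη.le hpη hS (M := B) (by linarith)
  exact ⟨B, S', hB, hS', hBS.iterate hmild hG hα hβ hc₁.le hη.le hpη hS' hB hD hBD⟩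

lemma ParabolicLowerBound.le_lintegral_duhamel_of_geometric [NeZero d]
    (h : ∀ n : ℕ, ParabolicLowerBound α β V (B * (4 ^ (1 + β * d / α)) ^ n) (4 ^ n * S))
    (hG : KernelLowerBound α β c₁ G) (hα : 0 < α) (hβ : 0 < β) (hc₁ : 0 ≤ c₁) (hη : 0 ≤ η)
    (hpη : β * d / α * η ≤ 1) (hB : 1 ≤ B) (hS : 1 ≤ S) {T τ : ℝ} (hT : 16 * S ≤ T)
    (hTτ : T ≤ τ) (hτT : τ ≤ 2 * T) {x : EuclideanSpace ℝ (Fin d)} (hx : ‖x‖ ≤ T ^ (β / α)) :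
    ENNReal.ofReal (duhamelConst d α β c₁ * Real.log 2
        * (B * (16 * S)⁻¹ ^ (1 + β * d / α) * 2 ^ (-(β * d / α))) * T)
      ≤ ∫⁻ s in Set.Ioo (T / 4) (T / 2),
          ∫⁻ y, V s y ^ (1 + η) * ENNReal.ofReal (G (τ - s) (x - y)) := by
  set p := β * d / α
  set K := duhamelConst d α β c₁
  have hK : 0 ≤ K := duhamelConst_nonneg d α β hc₁
  have hT0 : 0 < T := by linarith
  have hcT : 1 ≤ (16 * S)⁻¹ * T := by
    rw [le_inv_mul_iff₀ (by positivity)]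
    linarith
  have hVT := ParabolicLowerBound.of_geometric (by positivity) (by linarith) (by linarith) h
    (T := T) (by linarith)
  refine le_trans (ENNReal.ofReal_le_ofReal ?_) (hVT.le_lintegral_duhamel hG hα hβ hc₁
    (by positivity) hη hpη (by linarith) le_rfl (by linarith) (by linarith)
    (hx.trans (by gcongr)))
  rw [show T / 2 / (T / 4) = 2 by field_simp; norm_num, neg_div]
  calc K * Real.log 2 * (B * (16 * S)⁻¹ ^ (1 + p) * 2 ^ (-p)) * T
      = K * Real.log 2 * (B * (16 * S)⁻¹ ^ (1 + p) * 2 ^ (-p) * T) := by ring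
    _ ≤ K * Real.log 2 * ((B * ((16 * S)⁻¹ * T) ^ (1 + p)) ^ (1 + η) * τ ^ (-p)) :=
        mul_le_mul_of_nonneg_left (mul_rpow_le_rpow_mul_rpow_neg hη (by positivity) hB
          (by positivity) hcT (by linarith) hτT) (by positivity)
    _ = K * (B * ((16 * S)⁻¹ * T) ^ (1 + p)) ^ (1 + η) * τ ^ (-p) * Real.log 2 := by ring

end

theorem nonlinear_term_lower_bound_general
    (d : ℕ) (hd : 1 ≤ d) (α β η : ℝ)
    (hα : α ∈ Set.Ioo (0 : ℝ) 2) (hβ : β ∈ Set.Ioo (0 : ℝ) 1)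
    (hη : 0 < η) (hηc : η ≤ α / (β * d))
    (G : ℝ → EuclideanSpace ℝ (Fin d) → ℝ)
    (c₁ : ℝ) (hc₁ : 0 < c₁)
    (hGlower : ∀ t : ℝ, 0 < t → ∀ x : EuclideanSpace ℝ (Fin d),
      c₁ * min (t ^ (-(β * d) / α)) (t ^ β / ‖x‖ ^ ((d : ℝ) + α)) ≤ G t x)
    (V₀ : EuclideanSpace ℝ (Fin d) → ℝ)
    (hV₀meas : Measurable V₀) (hV₀nonneg : ∀ x, 0 ≤ V₀ x)
    (hV₀ne : ¬ (V₀ =ᵐ[volume] 0))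
    (V : ℝ → EuclideanSpace ℝ (Fin d) → ℝ≥0∞)
    (hmild : ∀ t : ℝ, 0 < t → ∀ x : EuclideanSpace ℝ (Fin d),
      V t x
        = (∫⁻ y, ENNReal.ofReal (G t (x - y)) * ENNReal.ofReal (V₀ y))
          + ∫⁻ s in Set.Ioo (0 : ℝ) t,
              ∫⁻ y, ENNReal.ofReal (G (t - s) (x - y)) * (V s y) ^ (1 + η)) :
    ∃ C : ℝ, 0 < C ∧ ∃ T₁ : ℝ, 0 < T₁ ∧
      ∀ T : ℝ, T₁ ≤ T → ∀ t : ℝ, 0 < t → t < T / 3 →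
        ∀ x : EuclideanSpace ℝ (Fin d), ‖x‖ ≤ T ^ (β / α) →
          ENNReal.ofReal (C * T)
            ≤ ∫⁻ s in Set.Ioo (0 : ℝ) T,
                ∫⁻ y, (V s y) ^ (1 + η) * ENNReal.ofReal (G (T + t - s) (x - y)) := by
  have : NeZero d := ⟨by omega⟩
  obtain ⟨hα, -⟩ := hα
  obtain ⟨hβ, -⟩ := hβ
  have hmild : IsMildSolution G V₀ η V := hmild
  have hpη : β * d / α * η ≤ 1 := by
    rw [div_mul_eq_mul_div, div_le_one hα, mul_comm]
    exact (le_div_iff₀ (by positivity)).1 hηc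
  obtain ⟨c₀, hc₀, S₀, hS₀, h₀⟩ := hmild.exists_parabolicLowerBound hGlower hα hβ hc₁
    hV₀meas hV₀nonneg hV₀ne
  obtain ⟨B, S, hB, hS, hgeom⟩ := h₀.exists_geometric hmild hGlower hα hβ hc₁ hc₀ hη hpη hS₀
    (D := 4 ^ (1 + β * d / α)) (Real.one_le_rpow (by norm_num) (by positivity))
  have hK := duhamelConst_pos d α β hc₁
  refine ⟨duhamelConst d α β c₁ * Real.log 2
      * (B * (16 * S)⁻¹ ^ (1 + β * d / α) * 2 ^ (-(β * d / α))), by positivity, 16 * S,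
    by positivity, fun T hT t ht htT x hx => ?_⟩
  calc _ ≤ ∫⁻ s in Set.Ioo (T / 4) (T / 2),
        ∫⁻ y, V s y ^ (1 + η) * ENNReal.ofReal (G (T + t - s) (x - y)) :=
        ParabolicLowerBound.le_lintegral_duhamel_of_geometric hgeom hGlower hα hβ hc₁.le hη.le
          hpη hB hS hT (by linarith) (by linarith) hx
    _ ≤ _ := lintegral_mono_set (Set.Ioo_subset_Ioo (by linarith) (by linarith))

/-- Proposition 3.2. For `0 < η ≤ α/(βd)`, a mild solution with
non-trivial nonnegative initial data satisfies
`∫₀^T ∫ V(s,y)^{1+η} G(T+t-s, x-y) dy ds ≳ T` for large `T`, `0 < t < T/3`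
and `|x| ≤ T^{β/α}`. -/
theorem nonlinear_term_lower_bound
    (d : ℕ) (hd : 1 ≤ d) (α β η : ℝ)
    (hα : α ∈ Set.Ioo (0 : ℝ) 2) (hβ : β ∈ Set.Ioo (0 : ℝ) 1)
    (hη : 0 < η) (hηc : η ≤ α / (β * d))
    (G : ℝ → EuclideanSpace ℝ (Fin d) → ℝ)
    (hGmeas : Measurable (Function.uncurry G))
    (hGnonneg : ∀ t x, 0 ≤ G t x)
    (c₁ : ℝ) (hc₁ : 0 < c₁)
    (hGlower : ∀ t : ℝ, 0 < t → ∀ x : EuclideanSpace ℝ (Fin d),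
      c₁ * min (t ^ (-(β * d) / α)) (t ^ β / ‖x‖ ^ ((d : ℝ) + α)) ≤ G t x)
    (V₀ : EuclideanSpace ℝ (Fin d) → ℝ)
    (hV₀meas : Measurable V₀) (hV₀nonneg : ∀ x, 0 ≤ V₀ x)
    (hV₀ne : ¬ (V₀ =ᵐ[volume] 0))
    (V : ℝ → EuclideanSpace ℝ (Fin d) → ℝ≥0∞)
    (hVmeas : Measurable (Function.uncurry V))
    (hmild : ∀ t : ℝ, 0 < t → ∀ x : EuclideanSpace ℝ (Fin d),
      V t x
        = (∫⁻ y, ENNReal.ofReal (G t (x - y)) * ENNReal.ofReal (V₀ y))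
          + ∫⁻ s in Set.Ioo (0 : ℝ) t,
              ∫⁻ y, ENNReal.ofReal (G (t - s) (x - y)) * (V s y) ^ (1 + η)) :
    ∃ C : ℝ, 0 < C ∧ ∃ T₁ : ℝ, 0 < T₁ ∧
      ∀ T : ℝ, T₁ ≤ T → ∀ t : ℝ, 0 < t → t < T / 3 →
        ∀ x : EuclideanSpace ℝ (Fin d), ‖x‖ ≤ T ^ (β / α) →
          ENNReal.ofReal (C * T)
            ≤ ∫⁻ s in Set.Ioo (0 : ℝ) T,
                ∫⁻ y, (V s y) ^ (1 + η) * ENNReal.ofReal (G (T + t - s) (x - y)) :=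
  nonlinear_term_lower_bound_general d hd α β η hα hβ hη hηc G c₁ hc₁ hGlower V₀ hV₀meas hV₀nonneg
    hV₀ne V hmild
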